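/- Let Kₙ = K₀(t₁,…,tₙ) be a primitive tower, M a monomial in t₁,…,tₙ with indicator m, and a ∈ K_{m−1}. If a ∈ K_{m−1}′ (a is a derivative of an element of K_{m−1}), then a·M ∈ Kₙ′ + Kₙ^{(≺M)}, i.e., a·M is congruent modulo derivatives in Kₙ to an element whose head monomial is strictly lower than M. -/

import Mathlib

/-!
Write `a = b'` with `b ∈ K_{m-1}`, so that `a·M = (b·M)' − b·M'`. By the Leibniz rule
`b·M' = ∑_j E_j b t_j' · M/t_j`, and `E_j ≠ 0` forces `j ≥ m`, so the coefficient `E_j b t_j'`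
lies in `K_{j-1}` while `M/t_j ≺ M`. It remains to see that `c·N ∈ Kₙ^{(≺M)}` whenever
`c ∈ K_{i}` and every monomial agreeing with `N` in `t_{i+1}, …, tₙ` is `≺ M`. Induct on `i`:
writing `c·t_i^{N_i} = A(t_i) + g` with `A ∈ K_{i-1}[X]` and `g` proper in `t_i`, the terms
of `A` only change the exponent of `t_i` and fall under the induction hypothesis, while
`g` times the part of `N` above `t_i` is already a matryoshka term.
-/

/-- `g` is `u`-proper over the subfield `L`: `g = p(u)/q(u)` with `deg p < deg q`. -/
def IsProperAt {F : Type*} [Field F] (L : Subfield F) (u : F) (g : F) : Prop :=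
  ∃ p q : Polynomial ↥L, q ≠ 0 ∧ p.degree < q.degree ∧
    g = Polynomial.aeval u p / Polynomial.aeval u q

/-- `g` is a linear combination of monomials in `t₁,…,tₙ` whose exponent vectors
satisfy `allowed` and whose coefficients satisfy `coeffOK`. -/
def MatryPart {F : Type*} [Field F] {n : ℕ} (t : Fin n → F)
    (allowed : (Fin n → ℕ) → Prop) (coeffOK : F → Prop) (g : F) : Prop :=
  ∃ (S : Finset (Fin n → ℕ)) (c : (Fin n → ℕ) → F),
    (∀ e ∈ S, allowed e) ∧ (∀ e ∈ S, coeffOK (c e)) ∧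
    g = ∑ e ∈ S, c e * ∏ j, t j ^ e j

/-- Pure lexicographic order on monomials in `t₁,…,tₙ` with `t₁ ≺ ⋯ ≺ tₙ`. -/
def MonLt {n : ℕ} (d e : Fin n → ℕ) : Prop :=
  ∃ j : Fin n, d j < e j ∧ ∀ k, j < k → d k = e k

/-- `f ∈ Kₙ^{(≺E)}`: `f` has a matryoshka decomposition all of whose monomials
are `≺ E`. -/
def BelowMon {F : Type*} [Field F] {n : ℕ} (t : Fin n → F)
    (K : Fin (n + 1) → Subfield F) (E : Fin n → ℕ) (f : F) : Prop :=
  ∃ (g0 : F) (g : Fin n → F),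
    MatryPart t (fun e => MonLt e E) (· ∈ K 0) g0 ∧
    (∀ i : Fin n, MatryPart t (fun e => (∀ j, e j ≠ 0 → i < j) ∧ MonLt e E)
      (IsProperAt (K i.castSucc) (t i)) (g i)) ∧
    f = g0 + ∑ i, g i
open Polynomial
section Leibniz
variable {R : Type*} [CommRing R] (δ : R → R)

theorem leibniz_one (hδmul : ∀ a b, δ (a * b) = δ a * b + a * δ b) : δ 1 = 0 := by
  simpa using hδmul 1 1

theorem leibniz_prod (hδmul : ∀ a b, δ (a * b) = δ a * b + a * δ b)
    {ι : Type*} [DecidableEq ι] (s : Finset ι) (f : ι → R) :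
    δ (∏ i ∈ s, f i) = ∑ i ∈ s, δ (f i) * ∏ k ∈ s.erase i, f k := by
  induction s using Finset.induction with
  | empty => simp [leibniz_one δ hδmul]
  | insert a s ha ih =>
    rw [Finset.prod_insert ha, hδmul, ih, Finset.sum_insert ha, Finset.erase_insert ha,
      Finset.mul_sum]
    congr 1
    refine Finset.sum_congr rfl fun i hi => ?_
    rw [Finset.erase_insert_of_ne (by rintro rfl; exact ha hi),
      Finset.prod_insert (fun h => ha (Finset.mem_of_mem_erase h))]
    ring

theorem leibniz_pow (hδmul : ∀ a b, δ (a * b) = δ a * b + a * δ b) (x : R) (e : ℕ) :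
    δ (x ^ e) = e * x ^ (e - 1) * δ x := by
  have h := leibniz_prod δ hδmul (Finset.range e) (fun _ => x)
  simp only [Finset.prod_const, Finset.card_range] at h
  rw [h, Finset.sum_congr rfl fun i hi => by rw [Finset.card_erase_of_mem hi, Finset.card_range],
    Finset.sum_const, Finset.card_range, nsmul_eq_mul]
  ring

theorem leibniz_monomial (hδmul : ∀ a b, δ (a * b) = δ a * b + a * δ b)
    {n : ℕ} (t : Fin n → R) (d : Fin n → ℕ) :
    δ (∏ j, t j ^ d j) = ∑ j, (d j * δ (t j)) * ∏ k, t k ^ Function.update d j (d j - 1) k := by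
  rw [leibniz_prod δ hδmul]
  refine Finset.sum_congr rfl fun j _ => ?_
  rw [Finset.prod_congr rfl fun k _ => Function.apply_update (fun k e => t k ^ e) d j _ k,
    Finset.prod_update_of_mem (Finset.mem_univ j), Finset.sdiff_singleton_eq_erase,
    leibniz_pow δ hδmul]
  ring

end Leibniz

theorem prod_pow_update_eq {M : Type*} [CommMonoid M] {n : ℕ} (t : Fin n → M) (d : Fin n → ℕ)
    (i : Fin n) (k : ℕ) :
    ∏ j, t j ^ Function.update d i k j =
      (∏ j, t j ^ (if j < i then d j else 0)) * t i ^ k *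
        ∏ j, t j ^ (if i < j then d j else 0) := by
  rw [← Fintype.prod_ite_eq' i (fun j => t j ^ k), ← Finset.prod_mul_distrib,
    ← Finset.prod_mul_distrib]
  refine Finset.prod_congr rfl fun j _ => ?_
  rcases lt_trichotomy j i with h | rfl | h
  · simp [h, h.ne, h.not_gt]
  · simp
  · simp [h, h.ne', h.not_gt]

section Proper
variable {F : Type*} [Field F] {L : Subfield F} {u : F}

theorem isProperAt_zero : IsProperAt L u 0 :=
  ⟨0, X, X_ne_zero, by simp, by simp⟩

theorem IsProperAt.add (hu : Transcendental L u) {f g : F}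
    (hf : IsProperAt L u f) (hg : IsProperAt L u g) : IsProperAt L u (f + g) := by
  obtain ⟨p, q, hq, hpq, rfl⟩ := hf
  obtain ⟨p', q', hq', hpq', rfl⟩ := hg
  refine ⟨p * q' + p' * q, q * q', mul_ne_zero hq hq', ?_, ?_⟩
  · refine (degree_add_le _ _).trans_lt (max_lt ?_ ?_)
    · rw [degree_mul, degree_mul]
      exact (WithBot.add_lt_add_iff_right (degree_ne_bot.2 hq')).2 hpq
    · rw [degree_mul, degree_mul, add_comm q.degree]
      exact (WithBot.add_lt_add_iff_right (degree_ne_bot.2 hq)).2 hpq'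
  · have hq0 : aeval u q ≠ 0 := fun h => hq (transcendental_iff.1 hu q h)
    have hq0' : aeval u q' ≠ 0 := fun h => hq' (transcendental_iff.1 hu q' h)
    simp only [map_add, map_mul]
    field_simp

theorem IsProperAt.mul_left {z : F} (hz : z ∈ L) {g : F} (hg : IsProperAt L u g) :
    IsProperAt L u (z * g) := by
  obtain ⟨p, q, hq, hpq, rfl⟩ := hg
  refine ⟨C ⟨z, hz⟩ * p, q, hq, ((degree_mul_le _ _).trans ?_).trans_lt hpq, ?_⟩
  · simpa using add_le_add (degree_C_le (a := (⟨z, hz⟩ : L))) (le_refl p.degree)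
  · simp only [map_mul, aeval_C, mul_div_assoc]
    rfl

theorem exists_eq_aeval_add_isProperAt {f : F} (hf : f ∈ Subfield.closure (L ∪ {u})) :
    ∃ (A : L[X]) (g : F), IsProperAt L u g ∧ f = aeval u A + g := by
  have hf' : f ∈ IntermediateField.adjoin L {u} := by
    rw [← IntermediateField.mem_toSubfield, IntermediateField.adjoin_toSubfield]
    rwa [show Set.range (algebraMap L F) = L from Subtype.range_coe]
  obtain ⟨p, q, rfl⟩ := (IntermediateField.mem_adjoin_simple_iff L f).1 hf'
  by_cases hq : aeval u q = 0
  · exact ⟨0, 0, isProperAt_zero, by simp [hq]⟩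
  have hq0 : q ≠ 0 := by rintro rfl; simp at hq
  refine ⟨p / q, aeval u (p % q) / aeval u q,
    ⟨p % q, q, hq0, EuclideanDomain.mod_lt _ hq0, rfl⟩, ?_⟩
  conv_lhs => rw [← EuclideanDomain.div_add_mod p q]
  simp only [map_add, map_mul]
  field_simp

end Proper

section Matry
variable {F : Type*} [Field F] {n : ℕ} (t : Fin n → F)
  {allowed : (Fin n → ℕ) → Prop} {coeffOK : F → Prop}

theorem matryPart_zero : MatryPart t allowed coeffOK 0 :=
  ⟨∅, fun _ => 0, by simp, by simp, by simp⟩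

theorem matryPart_monomial {c : F} {e : Fin n → ℕ} (he : allowed e) (hc : coeffOK c) :
    MatryPart t allowed coeffOK (c * ∏ j, t j ^ e j) :=
  ⟨{e}, fun _ => c, by simpa using he, by simpa using hc, by simp⟩

theorem MatryPart.add (hadd : ∀ x y, coeffOK x → coeffOK y → coeffOK (x + y))
    {f g : F} (hf : MatryPart t allowed coeffOK f) (hg : MatryPart t allowed coeffOK g) :
    MatryPart t allowed coeffOK (f + g) := by
  classical
  obtain ⟨S, c, hS, hc, rfl⟩ := hf
  obtain ⟨S', c', hS', hc', rfl⟩ := hg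
  refine ⟨S ∪ S', fun e => (if e ∈ S then c e else 0) + (if e ∈ S' then c' e else 0),
    fun e he => (Finset.mem_union.1 he).elim (hS e) (hS' e), fun e he => ?_, ?_⟩
  · by_cases h : e ∈ S <;> by_cases h' : e ∈ S' <;> simp_all
  · simp [add_mul, Finset.sum_add_distrib, ite_mul, Finset.union_inter_cancel_left,
      Finset.union_inter_cancel_right]

end Matry

section Tower
variable {F : Type*} [Field F] {n : ℕ} {t : Fin n → F} {K : Fin (n + 1) → Subfield F}

theorem mem_succ_of_adjoin
    (hadj : ∀ i : Fin n, K i.succ = Subfield.closure ((K i.castSucc : Set F) ∪ {t i}))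
    (i : Fin n) : t i ∈ K i.succ := by
  rw [hadj i]
  exact Subfield.subset_closure (Set.mem_union_right _ rfl)

theorem monotone_of_adjoin
    (hadj : ∀ i : Fin n, K i.succ = Subfield.closure ((K i.castSucc : Set F) ∪ {t i})) :
    Monotone K :=
  Fin.monotone_iff_le_succ.2 fun i => by
    rw [hadj i]
    exact fun x hx => Subfield.subset_closure (Set.mem_union_left _ hx)

end Tower

section BelowMon
variable {F : Type*} [Field F] {n : ℕ} {t : Fin n → F} {K : Fin (n + 1) → Subfield F}
  {E : Fin n → ℕ}

theorem belowMon_zero : BelowMon t K E 0 :=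
  ⟨0, 0, matryPart_zero t, fun _ => matryPart_zero t, by simp⟩

theorem BelowMon.add (htr : ∀ i : Fin n, Transcendental (K i.castSucc) (t i))
    {f g : F} (hf : BelowMon t K E f) (hg : BelowMon t K E g) : BelowMon t K E (f + g) := by
  obtain ⟨f₀, f', hf₀, hf', rfl⟩ := hf
  obtain ⟨g₀, g', hg₀, hg', rfl⟩ := hg
  refine ⟨f₀ + g₀, f' + g', hf₀.add t (fun _ _ => add_mem) hg₀,
    fun i => (hf' i).add t (fun _ _ hx hy => hx.add (htr i) hy) (hg' i), ?_⟩
  simp only [Pi.add_apply, Finset.sum_add_distrib]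
  ring

theorem belowMon_sum (htr : ∀ i : Fin n, Transcendental (K i.castSucc) (t i))
    {ι : Type*} {s : Finset ι} {f : ι → F} (h : ∀ i ∈ s, BelowMon t K E (f i)) :
    BelowMon t K E (∑ i ∈ s, f i) :=
  Finset.sum_induction f _ (fun _ _ => BelowMon.add htr) belowMon_zero h

theorem belowMon_mul_monomial_of_mem_zero {c : F} {e : Fin n → ℕ} (he : MonLt e E)
    (hc : c ∈ K 0) : BelowMon t K E (c * ∏ j, t j ^ e j) :=
  ⟨_, 0, matryPart_monomial t he hc, fun _ => matryPart_zero t, by simp⟩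

theorem belowMon_mul_monomial_of_isProperAt {c : F} {e : Fin n → ℕ} {p : Fin n}
    (he : MonLt e E) (hsupp : ∀ k, e k ≠ 0 → p < k) (hc : IsProperAt (K p.castSucc) (t p) c) :
    BelowMon t K E (c * ∏ j, t j ^ e j) := by
  refine ⟨0, Pi.single p (c * ∏ j, t j ^ e j), matryPart_zero t, fun i => ?_, by simp⟩
  rcases eq_or_ne i p with rfl | hip
  · simpa using matryPart_monomial t ⟨hsupp, he⟩ hc
  · simpa [hip] using matryPart_zero t

theorem belowMon_mul_monomial
    (hadj : ∀ i : Fin n, K i.succ = Subfield.closure ((K i.castSucc : Set F) ∪ {t i}))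
    (htr : ∀ i : Fin n, Transcendental (K i.castSucc) (t i)) (i : Fin (n + 1)) {c : F}
    (hc : c ∈ K i) {d : Fin n → ℕ}
    (hd : ∀ e : Fin n → ℕ, (∀ k : Fin n, i ≤ k.castSucc → e k = d k) → MonLt e E) :
    BelowMon t K E (c * ∏ j, t j ^ d j) := by
  induction i using Fin.induction generalizing c d with
  | zero => exact belowMon_mul_monomial_of_mem_zero (hd d fun _ _ => rfl) hc
  | succ i ih =>
    set lo := ∏ j, t j ^ (if j < i then d j else 0)
    set hi : Fin n → ℕ := fun j => if i < j then d j else 0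
    have hlo : lo ∈ K i.castSucc := Subfield.prod_mem _ fun j _ => by
      split_ifs with hj
      · exact pow_mem (monotone_of_adjoin hadj (Fin.succ_le_castSucc_iff.2 hj)
          (mem_succ_of_adjoin hadj j)) _
      · simp
    have hct : c * t i ^ d i ∈ K i.succ := mul_mem hc (pow_mem (mem_succ_of_adjoin hadj i) _)
    rw [hadj i] at hct
    obtain ⟨A, g, hg, hcA⟩ := exists_eq_aeval_add_isProperAt hct
    have hsplit : c * ∏ j, t j ^ d j =
        ∑ k ∈ Finset.range (A.natDegree + 1),
          (A.coeff k : F) * ∏ j, t j ^ Function.update d i k j + (lo * g) * ∏ j, t j ^ hi j := by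
      calc c * ∏ j, t j ^ d j = (c * t i ^ d i) * lo * ∏ j, t j ^ hi j := by
            rw [← Function.update_eq_self i d, prod_pow_update_eq, Function.update_eq_self]
            ring
        _ = _ := by
          rw [hcA, aeval_eq_sum_range, add_mul, add_mul, Finset.sum_mul, Finset.sum_mul]
          congr 1
          · refine Finset.sum_congr rfl fun k _ => ?_
            simp only [prod_pow_update_eq, Subfield.smul_def, smul_eq_mul, lo, hi]
            ring
          · ring
    rw [hsplit]
    refine (belowMon_sum htr fun k _ => ih (A.coeff k).2 fun e he => hd e fun j hj => ?_).add htr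
      (belowMon_mul_monomial_of_isProperAt (hd hi fun j hj => ?_) (fun j hj => ?_)
        (hg.mul_left hlo))
    · have hij : i < j := Fin.succ_le_castSucc_iff.1 hj
      rw [he j (Fin.castSucc_le_castSucc_iff.2 hij.le), Function.update_of_ne hij.ne']
    · simp [hi, Fin.succ_le_castSucc_iff.1 hj]
    · by_contra hij
      simp [hi, hij] at hj

end BelowMon

theorem derivative_coefficient_reduces_general (F : Type*) [Field F]
    (δ : F → F)
    (hδmul : ∀ a b : F, δ (a * b) = δ a * b + a * δ b)
    (n : ℕ) (t : Fin n → F) (K : Fin (n + 1) → Subfield F)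
    (hadj : ∀ i : Fin n,
      K i.succ = Subfield.closure ((K i.castSucc : Set F) ∪ {t i}))
    (htr : ∀ i : Fin n, Transcendental ↥(K i.castSucc) (t i))
    (hder : ∀ i : Fin n, δ (t i) ∈ K i.castSucc)
    (E : Fin n → ℕ) (m : Fin n)
    (hind : (E m ≠ 0 ∧ ∀ j, j < m → E j = 0) ∨
      ((∀ j, E j = 0) ∧ (m : ℕ) + 1 = n))
    (a : F)
    (ha : ∃ b ∈ K m.castSucc, δ b = a) :
    ∃ g r : F, BelowMon t K E r ∧ a * ∏ j, t j ^ E j = δ g + r := by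
  obtain ⟨b, hbK, rfl⟩ := ha
  refine ⟨b * ∏ j, t j ^ E j, -(b * δ (∏ j, t j ^ E j)), ?_, by rw [hδmul]; ring⟩
  rw [leibniz_monomial δ hδmul, Finset.mul_sum, ← Finset.sum_neg_distrib]
  refine belowMon_sum htr fun j _ => ?_
  rcases eq_or_ne (E j) 0 with hEj | hEj
  · simp [hEj, belowMon_zero]
  have hmj : m ≤ j := by
    rcases hind with ⟨-, hlow⟩ | ⟨hzero, -⟩
    · exact not_lt.1 fun hjm => hEj (hlow j hjm)
    · exact absurd (hzero j) hEj
  have hcoeff : -(b * (E j * δ (t j))) ∈ K j.castSucc :=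
    neg_mem (mul_mem (monotone_of_adjoin hadj (Fin.castSucc_le_castSucc_iff.2 hmj) hbK)
      (mul_mem (natCast_mem _ _) (hder j)))
  rw [← mul_assoc, ← neg_mul]
  refine belowMon_mul_monomial hadj htr j.castSucc hcoeff fun e he => ⟨j, ?_, fun k hjk => ?_⟩
  · rw [he j le_rfl, Function.update_self]
    omega
  · rw [he k (Fin.castSucc_le_castSucc_iff.2 hjk.le), Function.update_of_ne hjk.ne']

/-- Let `Kₙ = K₀(t₁,…,tₙ)` be a primitive tower, `M = t₁^{E₁}⋯tₙ^{Eₙ}` a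
monomial with indicator `m` (0-based), and `a ∈ K_{m-1}`.  If `a` is the
derivative of an element of `K_{m-1}`, then `a·M ∈ Kₙ′ + Kₙ^{(≺M)}`, i.e.
`a·M` is congruent modulo derivatives in `Kₙ` to an element whose head monomial
is strictly lower than `M`. -/
theorem derivative_coefficient_reduces (F : Type*) [Field F] [CharZero F]
    (δ : F → F)
    (hδadd : ∀ a b : F, δ (a + b) = δ a + δ b)
    (hδmul : ∀ a b : F, δ (a * b) = δ a * b + a * δ b)
    (n : ℕ) (t : Fin n → F) (K : Fin (n + 1) → Subfield F)
    (hclosed : ∀ i, ∀ a ∈ K i, δ a ∈ K i)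
    (hadj : ∀ i : Fin n,
      K i.succ = Subfield.closure ((K i.castSucc : Set F) ∪ {t i}))
    (htr : ∀ i : Fin n, Transcendental ↥(K i.castSucc) (t i))
    (hder : ∀ i : Fin n, δ (t i) ∈ K i.castSucc)
    (hconst : ∀ i : Fin n, ∀ y ∈ K i.succ, δ y = 0 → y ∈ K i.castSucc)
    (htop : K (Fin.last n) = ⊤)
    (E : Fin n → ℕ) (m : Fin n)
    (hind : (E m ≠ 0 ∧ ∀ j, j < m → E j = 0) ∨
      ((∀ j, E j = 0) ∧ (m : ℕ) + 1 = n))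
    (a : F) (haK : a ∈ K m.castSucc)
    (ha : ∃ b ∈ K m.castSucc, δ b = a) :
    ∃ g r : F, BelowMon t K E r ∧ a * ∏ j, t j ^ E j = δ g + r :=
  derivative_coefficient_reduces_general F δ hδmul n t K hadj htr hder E m hind a ha
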